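/- arXiv:1001.2348 — 6 statements merged into one kernel-verified Lean document; each statement's English description precedes it below -/
import Mathlib

section
/- Let E be a real inner product space and Δ : E →ₗ[ℝ] E a symmetric linear map satisfying the compactness property, the weak-regularity property, and the coercivity estimate with some constant k > 0. Then the range of Δ equals the orthogonal complement (ker Δ)ᗮ, and every α ∈ E decomposes uniquely as α = β + h with β in the range of Δ and h ∈ ker Δ. Consequently the equation Δ ω = α has a solution ω ∈ E if and only if α is orthogonal to ker Δ. (Hodge–de Rham decomposition theorem, abstract conditional form HdR 2.) -/
/-!
The compactness property makes `ker Δ` finite-dimensional (Riesz's lemma), so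
`E = ker Δ ⊕ (ker Δ)ᗮ`. Symmetry gives `range Δ ≤ (ker Δ)ᗮ`. Conversely, for `α ⟂ ker Δ`
coercivity bounds the functional `Δ θ ↦ ⟪α, θ⟫` on `range Δ`; by weak regularity its
Hahn–Banach extension is `⟪ω, ·⟫` for some `ω`, and then `⟪Δ ω - α, θ⟫ = 0` for all `θ`,
i.e. `Δ ω = α`.
-/

open scoped RealInnerProductSpace InnerProductSpace

theorem FiniteDimensional.of_forall_bounded_exists_cauchySeq_subseq
    {𝕜 F : Type*} [NontriviallyNormedField 𝕜] [CompleteSpace 𝕜]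
    [NormedAddCommGroup F] [NormedSpace 𝕜 F]
    (h : ∀ (u : ℕ → F) (c : ℝ), 0 < c → (∀ n, ‖u n‖ ≤ c) →
      ∃ φ : ℕ → ℕ, StrictMono φ ∧ CauchySeq (u ∘ φ)) :
    FiniteDimensional 𝕜 F := by
  by_contra hinf
  obtain ⟨R, u, hR, hu, hsep⟩ := exists_seq_norm_le_one_le_norm_sub hinf
  obtain ⟨φ, hφ, hcauchy⟩ := h u R (one_pos.trans hR) hu
  obtain ⟨N, hN⟩ := Metric.cauchySeq_iff'.mp hcauchy 1 one_pos
  have hclose := hN (N + 1) N.le_succ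
  have hfar := hsep (hφ N.lt_succ_self).ne'
  rw [Function.comp_apply, Function.comp_apply, dist_eq_norm] at hclose
  linarith

theorem Subtype.cauchySeq_coe_iff {α : Type*} [UniformSpace α] {p : α → Prop}
    {u : ℕ → Subtype p} : CauchySeq (fun n ↦ (u n : α)) ↔ CauchySeq u :=
  isUniformEmbedding_subtype_val.isUniformInducing.cauchy_map_iff (F := Filter.atTop.map u)

theorem LinearMap.finiteDimensional_ker_of_forall_bounded_exists_cauchySeq_subseq
    {𝕜 E F : Type*} [NontriviallyNormedField 𝕜] [CompleteSpace 𝕜]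
    [NormedAddCommGroup E] [NormedSpace 𝕜 E] [NormedAddCommGroup F] [NormedSpace 𝕜 F]
    (T : E →ₗ[𝕜] F)
    (hT : ∀ (u : ℕ → E) (c : ℝ), 0 < c → (∀ n, ‖u n‖ ≤ c) → (∀ n, ‖T (u n)‖ ≤ c) →
      ∃ φ : ℕ → ℕ, StrictMono φ ∧ CauchySeq (u ∘ φ)) :
    FiniteDimensional 𝕜 (LinearMap.ker T) := by
  refine .of_forall_bounded_exists_cauchySeq_subseq fun u c hc hu ↦ ?_
  have hTu (n : ℕ) : ‖T (u n)‖ ≤ c := by rw [LinearMap.mem_ker.mp (u n).2, norm_zero]; exact hc.le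
  obtain ⟨φ, hφ, hcauchy⟩ := hT (fun n ↦ u n) c hc hu hTu
  exact ⟨φ, hφ, Subtype.cauchySeq_coe_iff.mp hcauchy⟩

theorem LinearMap.IsSymmetric.range_le_orthogonal_ker {𝕜 E : Type*} [RCLike 𝕜]
    [NormedAddCommGroup E] [InnerProductSpace 𝕜 E] {T : E →ₗ[𝕜] E} (hT : T.IsSymmetric) :
    LinearMap.range T ≤ (LinearMap.ker T)ᗮ :=
  hT.orthogonal_range ▸ (LinearMap.range T).le_orthogonal_orthogonal

theorem LinearMap.exists_strongDual_comp_eq_of_norm_le {𝕜 F G : Type*} [RCLike 𝕜]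
    [AddCommGroup F] [Module 𝕜 F] [NormedAddCommGroup G] [NormedSpace 𝕜 G]
    (T : F →ₗ[𝕜] G) (g : F →ₗ[𝕜] 𝕜) (C : ℝ) (hg : ∀ x, ‖g x‖ ≤ C * ‖T x‖) :
    ∃ L : StrongDual 𝕜 G, ∀ x, L (T x) = g x := by
  have hker : g ∈ (LinearMap.ker T).dualAnnihilator :=
    (Submodule.mem_dualAnnihilator _).mpr fun x hx ↦ by simpa [LinearMap.mem_ker.mp hx] using hg x
  rw [← LinearMap.range_dualMap_eq_dualAnnihilator_ker] at hker
  obtain ⟨φ, rfl⟩ := hker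
  let f : StrongDual 𝕜 (LinearMap.range T) :=
    (φ.domRestrict (LinearMap.range T)).mkContinuous C fun ⟨_, x, rfl⟩ ↦ hg x
  obtain ⟨L, hL, -⟩ := exists_extension_norm_eq (LinearMap.range T) f
  exact ⟨L, fun x ↦ hL ⟨T x, x, rfl⟩⟩

section Coercive

variable {𝕜 E : Type*} [RCLike 𝕜] [NormedAddCommGroup E] [InnerProductSpace 𝕜 E]
  {T : E →ₗ[𝕜] E} [(LinearMap.ker T).HasOrthogonalProjection] {k : ℝ}

theorem norm_inner_le_of_mem_orthogonal_ker
    (hcoercive : ∀ γ ∈ (LinearMap.ker T)ᗮ, ‖γ‖ ≤ k * ‖T γ‖)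
    {α : E} (hα : α ∈ (LinearMap.ker T)ᗮ) (θ : E) : ‖⟪α, θ⟫_𝕜‖ ≤ ‖α‖ * k * ‖T θ‖ := by
  obtain ⟨h, hh, γ, hγ, rfl⟩ := (LinearMap.ker T).exists_add_mem_mem_orthogonal θ
  have hαh : ⟪α, h⟫_𝕜 = 0 := Submodule.inner_left_of_mem_orthogonal hh hα
  calc ‖⟪α, h + γ⟫_𝕜‖ = ‖⟪α, γ⟫_𝕜‖ := by rw [inner_add_right, hαh, zero_add]
    _ ≤ ‖α‖ * ‖γ‖ := norm_inner_le_norm α γ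
    _ ≤ ‖α‖ * (k * ‖T γ‖) := by gcongr; exact hcoercive γ hγ
    _ = ‖α‖ * k * ‖T (h + γ)‖ := by rw [map_add, LinearMap.mem_ker.mp hh, zero_add, mul_assoc]

theorem LinearMap.IsSymmetric.range_eq_orthogonal_ker (hT : T.IsSymmetric)
    (hweak : ∀ (α : E) (L : StrongDual 𝕜 E), (∀ θ : E, L (T θ) = ⟪α, θ⟫_𝕜) →
      ∃ ω : E, ∀ β : E, L β = ⟪ω, β⟫_𝕜)
    (hcoercive : ∀ γ ∈ (LinearMap.ker T)ᗮ, ‖γ‖ ≤ k * ‖T γ‖) :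
    LinearMap.range T = (LinearMap.ker T)ᗮ := by
  refine hT.range_le_orthogonal_ker.antisymm fun α hα ↦ ?_
  obtain ⟨L, hL⟩ := T.exists_strongDual_comp_eq_of_norm_le (innerₛₗ 𝕜 α) _
    (norm_inner_le_of_mem_orthogonal_ker hcoercive hα)
  obtain ⟨ω, hω⟩ := hweak α L hL
  have hTω : ∀ θ, ⟪T ω - α, θ⟫_𝕜 = 0 := fun θ ↦ by
    rw [inner_sub_left, hT, ← hω, hL, innerₛₗ_apply_apply, sub_self]
  exact ⟨ω, sub_eq_zero.mp (inner_self_eq_zero.mp (hTω _))⟩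

end Coercive

theorem Submodule.existsUnique_mem_mem_eq_add_of_isCompl {R M : Type*} [Ring R]
    [AddCommGroup M] [Module R M] {p q : Submodule R M} (hpq : IsCompl p q) (x : M) :
    ∃! u : M × M, u.1 ∈ p ∧ u.2 ∈ q ∧ x = u.1 + u.2 := by
  obtain ⟨u, v, rfl, huniq⟩ := Submodule.existsUnique_add_of_isCompl hpq x
  refine ⟨(u, v), ⟨u.2, v.2, rfl⟩, ?_⟩
  rintro ⟨a, b⟩ ⟨ha, hb, hab⟩
  obtain ⟨rfl, rfl⟩ := huniq ⟨a, ha⟩ ⟨b, hb⟩ hab.symm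
  rfl

theorem hodge_de_rham_decomposition_general
    {E : Type*} [NormedAddCommGroup E] [InnerProductSpace ℝ E]
    (Δ : E →ₗ[ℝ] E)
    (hsym : ∀ x y : E, ⟪Δ x, y⟫ = ⟪x, Δ y⟫)
    (hcompact : ∀ (α : ℕ → E) (c : ℝ), 0 < c → (∀ n, ‖α n‖ ≤ c) →
      (∀ n, ‖Δ (α n)‖ ≤ c) → ∃ φ : ℕ → ℕ, StrictMono φ ∧ CauchySeq (α ∘ φ))
    (hweak : ∀ (α : E) (L : E →L[ℝ] ℝ), (∀ θ : E, L (Δ θ) = ⟪α, θ⟫) →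
      ∃ ω : E, ∀ β : E, L β = ⟪ω, β⟫)
    (k : ℝ)
    (hcoercive : ∀ γ ∈ (LinearMap.ker Δ)ᗮ, ‖γ‖ ≤ k * ‖Δ γ‖) :
    LinearMap.range Δ = (LinearMap.ker Δ)ᗮ ∧
    (∀ α : E, ∃! p : E × E,
      p.1 ∈ LinearMap.range Δ ∧ p.2 ∈ LinearMap.ker Δ ∧ α = p.1 + p.2) ∧
    (∀ α : E, (∃ ω : E, Δ ω = α) ↔ α ∈ (LinearMap.ker Δ)ᗮ) := by
  have : FiniteDimensional ℝ (LinearMap.ker Δ) :=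
    Δ.finiteDimensional_ker_of_forall_bounded_exists_cauchySeq_subseq hcompact
  have hrange : LinearMap.range Δ = (LinearMap.ker Δ)ᗮ :=
    LinearMap.IsSymmetric.range_eq_orthogonal_ker hsym hweak hcoercive
  refine ⟨hrange, fun α ↦ ?_, fun α ↦ hrange ▸ LinearMap.mem_range.symm⟩
  exact Submodule.existsUnique_mem_mem_eq_add_of_isCompl
    (hrange ▸ (LinearMap.ker Δ).isCompl_orthogonal.symm) α

/-- Hodge–de Rham decomposition theorem, abstract conditional form (HdR 2):
if the symmetric operator `Δ` on a real inner product space satisfies the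
compactness property, the weak-regularity property and the coercivity
estimate, then `range Δ = (ker Δ)ᗮ`, every element decomposes uniquely as a
sum of an element of `range Δ` and an element of `ker Δ`, and `Δ ω = α` is
solvable iff `α ⟂ ker Δ`. -/
theorem hodge_de_rham_decomposition
    {E : Type*} [NormedAddCommGroup E] [InnerProductSpace ℝ E]
    (Δ : E →ₗ[ℝ] E)
    (hsym : ∀ x y : E, ⟪Δ x, y⟫ = ⟪x, Δ y⟫)
    (hcompact : ∀ (α : ℕ → E) (c : ℝ), 0 < c → (∀ n, ‖α n‖ ≤ c) →
      (∀ n, ‖Δ (α n)‖ ≤ c) → ∃ φ : ℕ → ℕ, StrictMono φ ∧ CauchySeq (α ∘ φ))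
    (hweak : ∀ (α : E) (L : E →L[ℝ] ℝ), (∀ θ : E, L (Δ θ) = ⟪α, θ⟫) →
      ∃ ω : E, ∀ β : E, L β = ⟪ω, β⟫)
    (k : ℝ) (hk : 0 < k)
    (hcoercive : ∀ γ ∈ (LinearMap.ker Δ)ᗮ, ‖γ‖ ≤ k * ‖Δ γ‖) :
    LinearMap.range Δ = (LinearMap.ker Δ)ᗮ ∧
    (∀ α : E, ∃! p : E × E,
      p.1 ∈ LinearMap.range Δ ∧ p.2 ∈ LinearMap.ker Δ ∧ α = p.1 + p.2) ∧
    (∀ α : E, (∃ ω : E, Δ ω = α) ↔ α ∈ (LinearMap.ker Δ)ᗮ) :=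
  hodge_de_rham_decomposition_general Δ hsym hcompact hweak k hcoercive
end

section
/- Let E be a real inner product space, G : E →ₗ[ℝ] E a linear map with ⟪G x, y⟫ = ⟪x, G y⟫ for all x, y ∈ E, let (ωₖ)ₖ≥1 be an orthonormal sequence in E and (μₖ)ₖ≥1 real numbers with G ωₖ = μₖ ωₖ for every k. Suppose (εₙ)ₙ≥1 is a sequence of nonnegative reals with εₙ → 0 such that for every n and every v ∈ E with ⟪v, ωₖ⟫ = 0 for all k ≤ n one has ‖G v‖ ≤ εₙ ‖v‖. Then for every β ∈ E, ‖G β − Σ_{k=1}^{n} ⟪G β, ωₖ⟫ ωₖ‖ → 0 as n → ∞; that is, the eigenfunction expansion of any element of the range of G converges to it in norm. (Theorem 7, abstract form.) -/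
open scoped RealInnerProductSpace

/-- Theorem 7 (abstract form): let `G` be self-adjoint with orthonormal
eigenvectors `ω k` (eigenvalues `μ k`), and suppose `‖G v‖ ≤ ε n * ‖v‖`
whenever `v` is orthogonal to the first `n` eigenvectors, where `ε n → 0`.
Then for every `β`, the eigenfunction expansion of `G β` converges to `G β`
in norm. -/
theorem eigenfunction_expansion_converges
    {E : Type*} [NormedAddCommGroup E] [InnerProductSpace ℝ E]
    (G : E →ₗ[ℝ] E)
    (hsym : ∀ x y : E, ⟪G x, y⟫ = ⟪x, G y⟫)
    (ω : ℕ → E) (hortho : Orthonormal ℝ ω)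
    (μ : ℕ → ℝ) (heig : ∀ kk, G (ω kk) = μ kk • ω kk)
    (ε : ℕ → ℝ) (hεnonneg : ∀ n, 0 ≤ ε n)
    (hεlim : Filter.Tendsto ε Filter.atTop (nhds 0))
    (hbound : ∀ (n : ℕ) (v : E), (∀ kk < n, ⟪v, ω kk⟫ = 0) →
      ‖G v‖ ≤ ε n * ‖v‖) :
    ∀ β : E,
      Filter.Tendsto
        (fun n => ‖G β - ∑ kk ∈ Finset.range n, ⟪G β, ω kk⟫ • ω kk‖)
        Filter.atTop (nhds 0) := by
  intro β
  set v : ℕ → E := fun n => β - ∑ kk ∈ Finset.range n, ⟪β, ω kk⟫ • ω kk with hv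
  have horth : ∀ n, ∀ kk < n, ⟪v n, ω kk⟫ = 0 := by
    intro n kk hk
    have := hortho.inner_left_sum (fun j => ⟪β, ω j⟫)
      (s := Finset.range n) (i := kk) (Finset.mem_range.mpr hk)
    simp only [hv, inner_sub_left, this]
    simp
  -- coefficient identity
  have hcoef : ∀ kk, ⟪G β, ω kk⟫ = μ kk * ⟪β, ω kk⟫ := by
    intro kk
    rw [hsym, heig, real_inner_smul_right]
  have hGv : ∀ n, G (v n) = G β - ∑ kk ∈ Finset.range n, ⟪G β, ω kk⟫ • ω kk := by
    intro n
    simp only [hv, map_sub, map_sum, map_smul, heig]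
    congr 1
    refine Finset.sum_congr rfl fun kk _ => ?_
    rw [hcoef kk, smul_smul, mul_comm]
  -- norm of v n bounded by ‖β‖
  have hnorm : ∀ n, ‖v n‖ ≤ ‖β‖ := by
    intro n
    have hperp : ⟪v n, ∑ kk ∈ Finset.range n, ⟪β, ω kk⟫ • ω kk⟫ = 0 := by
      rw [inner_sum]
      refine Finset.sum_eq_zero fun kk hk => ?_
      rw [real_inner_smul_right, horth n kk (Finset.mem_range.mp hk), mul_zero]
    have hβ : β = v n + ∑ kk ∈ Finset.range n, ⟪β, ω kk⟫ • ω kk := by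
      simp [hv]
    have hsq : ‖v n + ∑ kk ∈ Finset.range n, ⟪β, ω kk⟫ • ω kk‖ ^ 2
        = ‖v n‖ ^ 2 + ‖∑ kk ∈ Finset.range n, ⟪β, ω kk⟫ • ω kk‖ ^ 2 := by
      rw [norm_add_sq_real, hperp]; ring
    have h1 : ‖v n‖ ^ 2 ≤ ‖β‖ ^ 2 := by
      conv_rhs => rw [hβ]
      rw [hsq]; nlinarith [sq_nonneg ‖∑ kk ∈ Finset.range n, ⟪β, ω kk⟫ • ω kk‖]
    nlinarith [norm_nonneg (v n), norm_nonneg β]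
  have hbound' : ∀ n, ‖G β - ∑ kk ∈ Finset.range n, ⟪G β, ω kk⟫ • ω kk‖ ≤ ε n * ‖β‖ := by
    intro n
    rw [← hGv n]
    calc ‖G (v n)‖ ≤ ε n * ‖v n‖ := hbound n (v n) (horth n)
    _ ≤ ε n * ‖β‖ := by
      exact mul_le_mul_of_nonneg_left (hnorm n) (hεnonneg n)
  have hlim : Filter.Tendsto (fun n => ε n * ‖β‖) Filter.atTop (nhds 0) := by
    simpa using hεlim.mul_const ‖β‖
  refine squeeze_zero (fun n => norm_nonneg _) hbound' hlim
end

section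
/- Let E be a real inner product space and Δ : E →ₗ[ℝ] E a linear map satisfying the compactness property. Then ker Δ is a finite-dimensional subspace of E. (Theorem 1, abstract form: the space of harmonic p-forms is finite-dimensional.) -/
theorem not_cauchySeq_of_pairwise_le_dist {α : Type*} [PseudoMetricSpace α] {u : ℕ → α}
    {ε : ℝ} (hε : 0 < ε) (hu : Pairwise fun m n => ε ≤ dist (u m) (u n)) : ¬CauchySeq u := by
  intro hcauchy
  obtain ⟨N, hN⟩ := Metric.cauchySeq_iff.1 hcauchy ε hε
  exact (hN (N + 1) N.le_succ N le_rfl).not_ge (hu N.succ_ne_self)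

/-- Theorem 1 (abstract form): if `Δ` satisfies the compactness property,
then `ker Δ` (the space of harmonic elements) is finite-dimensional. -/
theorem harmonic_space_finiteDimensional
    {E : Type*} [NormedAddCommGroup E] [InnerProductSpace ℝ E]
    (Δ : E →ₗ[ℝ] E)
    (hcompact : ∀ (α : ℕ → E) (c : ℝ), 0 < c → (∀ n, ‖α n‖ ≤ c) →
      (∀ n, ‖Δ (α n)‖ ≤ c) → ∃ φ : ℕ → ℕ, StrictMono φ ∧ CauchySeq (α ∘ φ)) :
    FiniteDimensional ℝ (LinearMap.ker Δ) := by
  by_contra hinfinite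
  -- Riesz's lemma: an infinite-dimensional normed space has a bounded, 1-separated sequence.
  obtain ⟨R, f, hR, hfR, hsep⟩ := exists_seq_norm_le_one_le_norm_sub hinfinite
  obtain ⟨φ, hφ, hcauchy⟩ := hcompact (fun n => f n) R (by linarith) hfR
    (fun n => by simpa [(f n).2] using (zero_lt_one.trans hR).le)
  refine not_cauchySeq_of_pairwise_le_dist zero_lt_one ?_ hcauchy
  exact (hsep.comp_of_injective hφ.injective).mono fun m n h => by
    rwa [dist_eq_norm, Function.comp_apply, Function.comp_apply, ← Submodule.coe_sub]
end

section
/- Let E be a real inner product space and Δ : E →ₗ[ℝ] E a symmetric linear map satisfying the compactness property. Then the set of eigenvalues of Δ (the set of real λ such that Δ ω = λ ω for some ω ≠ 0) has no accumulation point in ℝ: there is no sequence (λⱼ) of pairwise distinct eigenvalues of Δ converging to a real number μ. (The eigenvalues of the Laplacian have no finite accumulation point.) -/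
open scoped RealInnerProductSpace

/-- The eigenvalues of a symmetric operator satisfying the compactness
property have no finite accumulation point: there is no sequence of pairwise
distinct eigenvalues converging to a real number. -/
theorem eigenvalues_no_accumulation_point
    {E : Type*} [NormedAddCommGroup E] [InnerProductSpace ℝ E]
    (Δ : E →ₗ[ℝ] E)
    (hsym : ∀ x y : E, ⟪Δ x, y⟫ = ⟪x, Δ y⟫)
    (hcompact : ∀ (α : ℕ → E) (c : ℝ), 0 < c → (∀ n, ‖α n‖ ≤ c) →
      (∀ n, ‖Δ (α n)‖ ≤ c) → ∃ φ : ℕ → ℕ, StrictMono φ ∧ CauchySeq (α ∘ φ)) :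
    ¬ ∃ (lam : ℕ → ℝ) (μ : ℝ),
        (∀ i j : ℕ, i ≠ j → lam i ≠ lam j) ∧
        (∀ j : ℕ, ∃ ω : E, ω ≠ 0 ∧ Δ ω = lam j • ω) ∧
        Filter.Tendsto lam Filter.atTop (nhds μ) := by
  rintro ⟨lam, μ, hdist, hev, htend⟩
  -- choose eigenvectors and normalize
  choose v hv0 hvev using hev
  have hvnorm : ∀ j, ‖v j‖ ≠ 0 := fun j => norm_ne_zero_iff.mpr (hv0 j)
  obtain ⟨ω, hωnorm, hωev⟩ :
      ∃ ω : ℕ → E, (∀ j, ‖ω j‖ = 1) ∧ ∀ j, Δ (ω j) = lam j • ω j := by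
    refine ⟨fun j => ‖v j‖⁻¹ • v j, fun j => ?_, fun j => ?_⟩
    · simp [norm_smul, abs_of_nonneg (inv_nonneg.mpr (norm_nonneg _)),
        inv_mul_cancel₀ (hvnorm j)]
    · simp only [map_smul, hvev j]
      rw [smul_comm]
  -- orthogonality of eigenvectors for distinct eigenvalues
  have horth : ∀ i j, i ≠ j → ⟪ω i, ω j⟫ = 0 := by
    intro i j hij
    have h1 : lam i * ⟪ω i, ω j⟫ = lam j * ⟪ω i, ω j⟫ := by
      have h := hsym (ω i) (ω j)
      rw [hωev i, hωev j] at h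
      rwa [real_inner_smul_left, real_inner_smul_right] at h
    have hne := hdist i j hij
    have : (lam i - lam j) * ⟪ω i, ω j⟫ = 0 := by ring_nf; linarith
    rcases mul_eq_zero.mp this with h | h
    · exact absurd (sub_eq_zero.mp h) hne
    · exact h
  -- boundedness of lam
  obtain ⟨C, hC⟩ : ∃ C, ∀ j, |lam j| ≤ C := by
    have hb : Bornology.IsBounded (Set.range lam) :=
      Metric.isBounded_range_of_tendsto lam htend
    obtain ⟨C, hC⟩ := hb.exists_norm_le
    exact ⟨C, fun j => hC _ ⟨j, rfl⟩⟩
  set c : ℝ := max C 1 with hc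
  have hc0 : 0 < c := lt_of_lt_of_le one_pos (le_max_right _ _)
  have hα : ∀ n, ‖ω n‖ ≤ c := fun n => by rw [hωnorm n]; exact le_max_right _ _
  have hΔα : ∀ n, ‖Δ (ω n)‖ ≤ c := by
    intro n
    rw [hωev n, norm_smul, hωnorm n, mul_one, Real.norm_eq_abs]
    exact le_trans (hC n) (le_max_left _ _)
  obtain ⟨φ, hφ, hcauchy⟩ := hcompact ω c hc0 hα hΔα
  -- Cauchy contradicts orthonormality
  rw [Metric.cauchySeq_iff] at hcauchy
  obtain ⟨N, hN⟩ := hcauchy 1 one_pos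
  have hmn : φ N ≠ φ (N + 1) := fun h => by
    have := hφ.injective h; omega
  have hd : dist ((ω ∘ φ) N) ((ω ∘ φ) (N + 1)) < 1 := hN N le_rfl (N + 1) (by omega)
  have hsq : ‖ω (φ N) - ω (φ (N + 1))‖ ^ 2 = 2 := by
    rw [norm_sub_sq_real, hωnorm, hωnorm, horth _ _ hmn]
    norm_num
  have : dist ((ω ∘ φ) N) ((ω ∘ φ) (N + 1)) = Real.sqrt 2 := by
    rw [Function.comp_apply, Function.comp_apply, dist_eq_norm, ← hsq,
      Real.sqrt_sq (norm_nonneg _)]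
  rw [this] at hd
  have : (1 : ℝ) < Real.sqrt 2 := by
    rw [show (1:ℝ) = Real.sqrt 1 from (Real.sqrt_one).symm]
    exact Real.sqrt_lt_sqrt (by norm_num) (by norm_num)
  linarith
end

section
/- Let E be a real inner product space, Δ : E →ₗ[ℝ] E a symmetric linear map with ker Δ finite-dimensional, and suppose Δ satisfies the coercivity estimate with constant k > 0. Then for every α ∈ (ker Δ)ᗮ and every γ ∈ E one has |⟪α, γ⟫| ≤ k ‖α‖ ‖Δ γ‖. (This is the boundedness of the weak-solution functional L(Δγ) = ⟪α, γ⟫ established via Lemma 2 in the proof of the Hodge theorem.) -/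
open scoped RealInnerProductSpace

/-!
Split `γ = y + z` with `y ∈ ker Δ` and `z ∈ (ker Δ)ᗮ`; the orthogonal projection onto `ker Δ`
exists because a finite-dimensional subspace is complete. Then `Δ γ = Δ z` and
`⟪α, γ⟫ = ⟪α, z⟫`, so Cauchy–Schwarz and the coercivity estimate for `z` give the bound.
-/

theorem LinearMap.abs_inner_le_of_norm_le_mul_norm_map_on_ker_orthogonal
    {E F : Type*} [NormedAddCommGroup E] [InnerProductSpace ℝ E] [SeminormedAddCommGroup F]
    [Module ℝ F] (f : E →ₗ[ℝ] F) [(LinearMap.ker f).HasOrthogonalProjection] {k : ℝ}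
    (hcoercive : ∀ γ ∈ (LinearMap.ker f)ᗮ, ‖γ‖ ≤ k * ‖f γ‖)
    {α : E} (hα : α ∈ (LinearMap.ker f)ᗮ) (γ : E) :
    |⟪α, γ⟫| ≤ k * ‖α‖ * ‖f γ‖ := by
  obtain ⟨y, hy, z, hz, rfl⟩ := (LinearMap.ker f).exists_add_mem_mem_orthogonal γ
  have hfy : f y = 0 := hy
  have hαy : ⟪α, y⟫ = 0 := Submodule.inner_left_of_mem_orthogonal hy hα
  calc |⟪α, y + z⟫| = |⟪α, z⟫| := by rw [inner_add_right, hαy, zero_add]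
    _ ≤ ‖α‖ * ‖z‖ := abs_real_inner_le_norm α z
    _ ≤ ‖α‖ * (k * ‖f z‖) := mul_le_mul_of_nonneg_left (hcoercive z hz) (norm_nonneg α)
    _ = k * ‖α‖ * ‖f (y + z)‖ := by rw [map_add, hfy, zero_add]; ring

theorem weak_solution_functional_bounded_general
    {E : Type*} [NormedAddCommGroup E] [InnerProductSpace ℝ E]
    (Δ : E →ₗ[ℝ] E)
    (hfin : FiniteDimensional ℝ (LinearMap.ker Δ))
    (k : ℝ)
    (hcoercive : ∀ γ ∈ (LinearMap.ker Δ)ᗮ, ‖γ‖ ≤ k * ‖Δ γ‖) :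
    ∀ α ∈ (LinearMap.ker Δ)ᗮ, ∀ γ : E, |⟪α, γ⟫| ≤ k * ‖α‖ * ‖Δ γ‖ := by
  have : (LinearMap.ker Δ).HasOrthogonalProjection := .ofCompleteSpace _
  exact fun α hα ↦ Δ.abs_inner_le_of_norm_le_mul_norm_map_on_ker_orthogonal hcoercive hα

/-- Boundedness of the weak-solution functional `L(Δγ) = ⟪α, γ⟫`: if `Δ` is
symmetric with finite-dimensional kernel and satisfies the coercivity
estimate with constant `k > 0`, then `|⟪α, γ⟫| ≤ k ‖α‖ ‖Δ γ‖` for every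
`α ∈ (ker Δ)ᗮ` and every `γ`. -/
theorem weak_solution_functional_bounded
    {E : Type*} [NormedAddCommGroup E] [InnerProductSpace ℝ E]
    (Δ : E →ₗ[ℝ] E)
    (hsym : ∀ x y : E, ⟪Δ x, y⟫ = ⟪x, Δ y⟫)
    (hfin : FiniteDimensional ℝ (LinearMap.ker Δ))
    (k : ℝ) (hk : 0 < k)
    (hcoercive : ∀ γ ∈ (LinearMap.ker Δ)ᗮ, ‖γ‖ ≤ k * ‖Δ γ‖) :
    ∀ α ∈ (LinearMap.ker Δ)ᗮ, ∀ γ : E, |⟪α, γ⟫| ≤ k * ‖α‖ * ‖Δ γ‖ :=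
  weak_solution_functional_bounded_general Δ hfin k hcoercive
end

section
/- Let E be a real inner product space, G : E →ₗ[ℝ] E a linear map with ⟪G x, y⟫ = ⟪x, G y⟫ for all x, y ∈ E, and let μ > 0 be such that ‖G v‖ ≤ μ ‖v‖ for all v ∈ E. Then for every β ∈ E with ‖β‖ = 1, ‖G(G β) − μ² β‖² ≤ μ⁴ − μ² ‖G β‖². (Inequality (17) in the proof of Theorem 6.) -/
open scoped RealInnerProductSpace

/-- Inequality (17) in the proof of Theorem 6: for a self-adjoint `G` with
`‖G v‖ ≤ μ ‖v‖` and a unit vector `β`,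
`‖G(G β) - μ² β‖² ≤ μ⁴ - μ² ‖G β‖²`. -/
theorem maximizing_sequence_inequality
    {E : Type*} [NormedAddCommGroup E] [InnerProductSpace ℝ E]
    (G : E →ₗ[ℝ] E)
    (hsym : ∀ x y : E, ⟪G x, y⟫ = ⟪x, G y⟫)
    (μ : ℝ) (hμ : 0 < μ)
    (hbound : ∀ v : E, ‖G v‖ ≤ μ * ‖v‖) :
    ∀ β : E, ‖β‖ = 1 →
      ‖G (G β) - μ ^ 2 • β‖ ^ 2 ≤ μ ^ 4 - μ ^ 2 * ‖G β‖ ^ 2 := by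
  intro β hβ
  have h1 : ‖G (G β) - μ ^ 2 • β‖ ^ 2
      = ‖G (G β)‖ ^ 2 - 2 * ⟪G (G β), μ ^ 2 • β⟫ + ‖μ ^ 2 • β‖ ^ 2 :=
    norm_sub_sq_real _ _
  have h2 : ⟪G (G β), μ ^ 2 • β⟫ = μ ^ 2 * ‖G β‖ ^ 2 := by
    rw [real_inner_smul_right, hsym, real_inner_self_eq_norm_sq]
  have h3 : ‖μ ^ 2 • β‖ ^ 2 = μ ^ 4 := by
    rw [norm_smul, hβ]
    simp [abs_of_pos (pow_pos hμ 2)]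
    ring
  have h4 : ‖G (G β)‖ ≤ μ * ‖G β‖ := hbound _
  have h5 : (0:ℝ) ≤ ‖G (G β)‖ := norm_nonneg _
  nlinarith [norm_nonneg (G β)]
end
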